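/- For all n ≥ 0, κ(n) = n! · ((1+√3)^{n+1} − (1−√3)^{n+1}) / (2^{n+1}·√3), where κ is defined by κ(0)=1, κ(1)=1 and κ(n) = n·κ(n−1) + C(n,2)·κ(n−2). -/
import Mathlib


/-- `κ(0)=1`, `κ(1)=1`, `κ(n) = n·κ(n−1) + C(n,2)·κ(n−2)`. -/
def kappa : ℕ → ℕ
  | 0 => 1
  | 1 => 1
  | n + 2 => (n + 2) * kappa (n + 1) + (n + 2).choose 2 * kappa n

lemma sq3_pos : (0:ℝ) < Real.sqrt 3 := Real.sqrt_pos.mpr (by norm_num)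

lemma sq3_sq : Real.sqrt 3 * Real.sqrt 3 = 3 :=
  Real.mul_self_sqrt (by norm_num)

lemma kappa_pair (n : ℕ) :
    (kappa n : ℝ) =
      (Nat.factorial n : ℝ) *
        ((1 + Real.sqrt 3) ^ (n + 1) - (1 - Real.sqrt 3) ^ (n + 1)) /
          (2 ^ (n + 1) * Real.sqrt 3) ∧
    (kappa (n+1) : ℝ) =
      (Nat.factorial (n+1) : ℝ) *
        ((1 + Real.sqrt 3) ^ (n + 2) - (1 - Real.sqrt 3) ^ (n + 2)) /
          (2 ^ (n + 2) * Real.sqrt 3) := by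
  set s := Real.sqrt 3 with hs
  have hs0 : s ≠ 0 := ne_of_gt sq3_pos
  have hsq : s * s = 3 := sq3_sq
  induction n with
  | zero =>
    constructor
    · simp [kappa]
      field_simp
      ring
    · show ((1:ℕ):ℝ) = _
      field_simp [Nat.factorial]
      ring_nf
  | succ n ih =>
    obtain ⟨h1, h2⟩ := ih
    refine ⟨h2, ?_⟩
    have hk : (kappa (n+2) : ℝ) = (n+2) * kappa (n+1) + ((n+2)*(n+1)/2) * kappa n := by
      show ((((n+2) * kappa (n + 1) + (n + 2).choose 2 * kappa n : ℕ)):ℝ) = _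
      have hd : 2 ∣ (n+2) * (n+1) := by
        have h := Nat.even_mul_succ_self (n+1)
        rw [mul_comm]; exact h.two_dvd
      have hc : ((n+2).choose 2 : ℝ) = (n+2)*(n+1)/2 := by
        have key : (n+2).choose 2 = (n+2)*(n+1)/2 := by
          rw [Nat.choose_two_right]
          norm_num
        rw [key, Nat.cast_div hd (by norm_num)]
        try push_cast
        try ring
      push_cast
      rw [hc]
      try ring
    have hA3 : (1+s) ^ (n+1+2) = (1+s)^(n+1) * (4 + 2*s) := by
      rw [pow_add]; linear_combination ((1+s)^(n+1)) * hsq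
    have hB3 : (1-s) ^ (n+1+2) = (1-s)^(n+1) * (4 - 2*s) := by
      rw [pow_add]; linear_combination ((1-s)^(n+1)) * hsq
    have hA2 : (1+s) ^ (n+2) = (1+s)^(n+1) * (1+s) := by rw [pow_succ]
    have hB2 : (1-s) ^ (n+2) = (1-s)^(n+1) * (1-s) := by rw [pow_succ]
    rw [hk, h1, h2]
    have hfac : (Nat.factorial (n+2) : ℝ) = (n+2) * (n+1) * Nat.factorial n := by
      push_cast [Nat.factorial_succ]; ring
    have hfac1 : (Nat.factorial (n+1) : ℝ) = (n+1) * Nat.factorial n := by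
      push_cast [Nat.factorial_succ]; ring
    rw [hfac, hfac1, hA3, hB3, hA2, hB2]
    field_simp
    ring

/-- Closed formula:
`κ(n) = n! · ((1+√3)^{n+1} − (1−√3)^{n+1}) / (2^{n+1}·√3)`. -/
theorem kappa_closed_form (n : ℕ) :
    (kappa n : ℝ) =
      (Nat.factorial n : ℝ) *
        ((1 + Real.sqrt 3) ^ (n + 1) - (1 - Real.sqrt 3) ^ (n + 1)) /
          (2 ^ (n + 1) * Real.sqrt 3) := by
  exact (kappa_pair n).1
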